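/- Let f, g : ℝ → ℝ with f Q-concave piecewise distance-like and g distance-like (both in the sense of the model functions log cosh(x − a) + b). Then f − g is Q-concave and piecewise monotone; moreover, if f − g vanishes at two points i < j, then f − g ≥ 0 on [i, j] and f − g ≤ 0 on ℝ \ [i, j]. -/

import Mathlib

/-!
On the `m`-th piece, `f - g` is `log cosh (x - c m) - log cosh (x - a)` plus a constant; its
derivative `tanh (x - c m) - tanh (x - a)` has the sign of `a - c m`. Q-concavity says that the
centres `c m` increase with `m`, so `f - g` increases (strictly while `c m < a`), is then
constant, and finally decreases strictly. Hence once `f - g` has dropped it keeps dropping, and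
where it rises it has been rising strictly all along; this pins down the sign of `f - g` around
two zeros.
-/

namespace Real

theorem strictMono_tanh : StrictMono tanh := fun x y hxy => by
  by_contra! h
  have := artanh_le_artanh (neg_one_lt_tanh y) (tanh_lt_one x) h
  rw [artanh_tanh, artanh_tanh] at this
  linarith

theorem hasDerivAt_log_cosh_sub (c x : ℝ) :
    HasDerivAt (fun x => log (cosh (x - c))) (tanh (x - c)) x := by
  rw [tanh_eq_sinh_div_cosh]
  exact ((hasDerivAt_cosh (x - c)).log (cosh_pos _).ne').comp_sub_const x c

theorem monotone_log_cosh_sub_sub_log_cosh_sub {c a : ℝ} (h : c ≤ a) :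
    Monotone fun x => log (cosh (x - c)) - log (cosh (x - a)) :=
  monotone_of_hasDerivAt_nonneg
    (fun x => (hasDerivAt_log_cosh_sub c x).sub (hasDerivAt_log_cosh_sub a x))
    (fun x => sub_nonneg.2 (strictMono_tanh.monotone (by linarith)))

theorem strictMono_log_cosh_sub_sub_log_cosh_sub {c a : ℝ} (h : c < a) :
    StrictMono fun x => log (cosh (x - c)) - log (cosh (x - a)) :=
  strictMono_of_hasDerivAt_pos
    (fun x => (hasDerivAt_log_cosh_sub c x).sub (hasDerivAt_log_cosh_sub a x))
    (fun x => sub_pos.2 (strictMono_tanh (by linarith)))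

end Real

namespace Breakpoints

variable {α β : Type*} [LinearOrder α] {N : ℕ} {u : Fin N → α}

/-- The closed interval `[u (m - 1), u m]`, unbounded below for `m = 0` and above for `m = N`. -/
def piece (u : Fin N → α) (m : Fin (N + 1)) : Set α :=
  {x | ∀ k : Fin N, ((k : ℕ) < (m : ℕ) → u k ≤ x) ∧ ((m : ℕ) ≤ (k : ℕ) → x ≤ u k)}

theorem mem_piece_castSucc (hu : Monotone u) (k : Fin N) : u k ∈ piece u k.castSucc :=
  fun _ => ⟨fun h => hu (Fin.le_iff_val_le_val.2 h.le),
    fun h => hu (Fin.le_iff_val_le_val.2 h)⟩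

theorem mem_piece_succ (hu : Monotone u) (k : Fin N) : u k ∈ piece u k.succ :=
  fun _ => ⟨fun h => hu (Fin.le_iff_val_le_val.2 (Nat.lt_succ_iff.1 h)),
    fun h => hu (Fin.le_iff_val_le_val.2 (Nat.le_of_succ_le h))⟩

theorem le_of_mem_piece_of_lt {x y : α} {m m' : Fin (N + 1)} (hx : x ∈ piece u m)
    (hy : y ∈ piece u m') (hxy : x < y) : m ≤ m' := by
  by_contra! h
  have hm' : (m' : ℕ) < N := by omega
  exact (((hy ⟨m', hm'⟩).2 le_rfl).trans ((hx ⟨m', hm'⟩).1 h)).not_gt hxy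

theorem exists_mem_piece (hu : Monotone u) (x : α) : ∃ m, x ∈ piece u m := by
  classical
  set S := Finset.univ.filter fun k => u k ≤ x
  refine ⟨⟨S.card, Nat.lt_succ_of_le ((Finset.card_filter_le _ _).trans_eq (by simp))⟩,
    fun k => ⟨fun hk => ?_, fun hk => ?_⟩⟩
  · by_contra! hxk
    have : S ⊆ Finset.Iio k := fun k' hk' => Finset.mem_Iio.2 <| lt_of_not_ge fun hkk' =>
      ((Finset.mem_filter.1 hk').2.trans_lt hxk).not_ge (hu hkk')
    have := Finset.card_le_card this
    simp only [Fin.card_Iio] at this hk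
    omega
  · by_contra! hxk
    have : Finset.Iic k ⊆ S := fun k' hk' =>
      Finset.mem_filter.2 ⟨Finset.mem_univ _, (hu (Finset.mem_Iic.1 hk')).trans hxk.le⟩
    have := Finset.card_le_card this
    simp only [Fin.card_Iic] at this hk
    omega

variable [Preorder β] {H : α → β}

theorem le_of_monotoneOn_piece (hu : Monotone u) {m₁ m₂ : Fin (N + 1)} (hm : m₁ ≤ m₂)
    (hH : ∀ m, m₁ ≤ m → m ≤ m₂ → MonotoneOn H (piece u m)) {x y : α}
    (hx : x ∈ piece u m₁) (hy : y ∈ piece u m₂) (hxy : x ≤ y) : H x ≤ H y := by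
  induction m₂ using Fin.induction generalizing y with
  | zero =>
    obtain rfl := le_antisymm hm (Fin.zero_le _)
    exact hH 0 le_rfl le_rfl hx hy hxy
  | succ k ih =>
    rcases hm.lt_or_eq with hlt | rfl
    · have hk : m₁ ≤ k.castSucc := Fin.le_castSucc_iff.2 hlt
      have hxk : x ≤ u k := (hx k).2 hk
      have hky : u k ≤ y := (hy k).1 (by simp)
      exact (ih hk (fun m h₁ h₂ => hH m h₁ (h₂.trans k.castSucc_le_succ))
        (mem_piece_castSucc hu k) hxk).trans (hH k.succ hlt.le le_rfl (mem_piece_succ hu k) hy hky)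
    · exact hH _ le_rfl le_rfl hx hy hxy

theorem lt_of_strictMonoOn_piece (hu : Monotone u) {m₁ m₂ : Fin (N + 1)} (hm : m₁ ≤ m₂)
    (hH : ∀ m, m₁ ≤ m → m ≤ m₂ → StrictMonoOn H (piece u m)) {x y : α}
    (hx : x ∈ piece u m₁) (hy : y ∈ piece u m₂) (hxy : x < y) : H x < H y := by
  induction m₂ using Fin.induction generalizing y with
  | zero =>
    obtain rfl := le_antisymm hm (Fin.zero_le _)
    exact hH 0 le_rfl le_rfl hx hy hxy
  | succ k ih =>
    rcases hm.lt_or_eq with hlt | rfl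
    · have hk : m₁ ≤ k.castSucc := Fin.le_castSucc_iff.2 hlt
      have hky : u k ≤ y := (hy k).1 (by simp)
      have hH_succ := hH k.succ hlt.le le_rfl
      rcases ((hx k).2 hk).lt_or_eq with hxk | rfl
      · exact (ih hk (fun m h₁ h₂ => hH m h₁ (h₂.trans k.castSucc_le_succ))
          (mem_piece_castSucc hu k) hxk).trans_le
          (hH_succ.monotoneOn (mem_piece_succ hu k) hy hky)
      · exact hH_succ (mem_piece_succ hu k) hy hxy
    · exact hH _ le_rfl le_rfl hx hy hxy

end Breakpoints

section PiecewiseLogCosh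

open Breakpoints Real

variable {N : ℕ} {u : Fin N → ℝ} {c e : Fin (N + 1) → ℝ} {a : ℝ} {F : ℝ → ℝ}

variable (hF : ∀ m, ∀ x ∈ piece u m, F x = log (cosh (x - c m)) - log (cosh (x - a)) + e m)
include hF

theorem monotoneOn_piece_of_le {m : Fin (N + 1)} (hm : c m ≤ a) : MonotoneOn F (piece u m) :=
  fun x hx y hy hxy => by
    rw [hF m x hx, hF m y hy]
    linarith [monotone_log_cosh_sub_sub_log_cosh_sub hm hxy]

theorem strictMonoOn_piece_of_lt {m : Fin (N + 1)} (hm : c m < a) :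
    StrictMonoOn F (piece u m) :=
  fun x hx y hy hxy => by
    rw [hF m x hx, hF m y hy]
    linarith [strictMono_log_cosh_sub_sub_log_cosh_sub hm hxy]

theorem antitoneOn_piece_of_ge {m : Fin (N + 1)} (hm : a ≤ c m) : AntitoneOn F (piece u m) :=
  fun x hx y hy hxy => by
    rw [hF m x hx, hF m y hy]
    linarith [monotone_log_cosh_sub_sub_log_cosh_sub hm hxy]

theorem strictAntiOn_piece_of_gt {m : Fin (N + 1)} (hm : a < c m) :
    StrictAntiOn F (piece u m) :=
  fun x hx y hy hxy => by
    rw [hF m x hx, hF m y hy]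
    linarith [strictMono_log_cosh_sub_sub_log_cosh_sub hm hxy]

variable (hu : Monotone u) (hc : Monotone c)
include hu hc

theorem apply_le_apply_of_center_le {p q : ℝ} {m : Fin (N + 1)} (hpq : p < q)
    (hq : q ∈ piece u m) (hm : c m ≤ a) : F p ≤ F q := by
  obtain ⟨m', hp⟩ := exists_mem_piece hu p
  exact le_of_monotoneOn_piece hu (le_of_mem_piece_of_lt hp hq hpq)
    (fun _ _ h => monotoneOn_piece_of_le hF ((hc h).trans hm)) hp hq hpq.le

theorem apply_lt_apply_of_center_lt {p q : ℝ} {m : Fin (N + 1)} (hpq : p < q)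
    (hq : q ∈ piece u m) (hm : c m < a) : F p < F q := by
  obtain ⟨m', hp⟩ := exists_mem_piece hu p
  exact lt_of_strictMonoOn_piece hu (le_of_mem_piece_of_lt hp hq hpq)
    (fun _ _ h => strictMonoOn_piece_of_lt hF ((hc h).trans_lt hm)) hp hq hpq

theorem apply_le_apply_of_le_center {q r : ℝ} {m : Fin (N + 1)} (hqr : q < r)
    (hq : q ∈ piece u m) (hm : a ≤ c m) : F r ≤ F q := by
  obtain ⟨m', hr⟩ := exists_mem_piece hu r
  exact le_of_monotoneOn_piece (β := ℝᵒᵈ) hu (le_of_mem_piece_of_lt hq hr hqr)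
    (fun _ h _ => (antitoneOn_piece_of_ge hF (hm.trans (hc h))).dual_right) hq hr hqr.le

theorem apply_lt_apply_of_lt_center {q r : ℝ} {m : Fin (N + 1)} (hqr : q < r)
    (hq : q ∈ piece u m) (hm : a < c m) : F r < F q := by
  obtain ⟨m', hr⟩ := exists_mem_piece hu r
  exact lt_of_strictMonoOn_piece (β := ℝᵒᵈ) hu (le_of_mem_piece_of_lt hq hr hqr)
    (fun _ h _ => (strictAntiOn_piece_of_gt hF (hm.trans_le (hc h))).dual_right) hq hr hqr

theorem apply_lt_of_descent ⦃p q r : ℝ⦄ (hpq : p < q) (hqr : q < r) (h : F q < F p) :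
    F r < F q := by
  obtain ⟨m, hq⟩ := exists_mem_piece hu q
  exact apply_lt_apply_of_lt_center hF hu hc hqr hq
    (lt_of_not_ge fun hm => (apply_le_apply_of_center_le hF hu hc hpq hq hm).not_gt h)

theorem apply_lt_of_ascent ⦃p q r : ℝ⦄ (hpq : p < q) (hqr : q < r) (h : F q < F r) :
    F p < F q := by
  obtain ⟨m, hq⟩ := exists_mem_piece hu q
  exact apply_lt_apply_of_center_lt hF hu hc hpq hq
    (lt_of_not_ge fun hm => (apply_le_apply_of_le_center hF hu hc hqr hq hm).not_gt h)

end PiecewiseLogCosh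

theorem le_on_Icc_and_ge_off_Icc {α β : Type*} [LinearOrder α] [LinearOrder β] {F : α → β}
    (hdesc : ∀ ⦃p q r⦄, p < q → q < r → F q < F p → F r < F q)
    (hasc : ∀ ⦃p q r⦄, p < q → q < r → F q < F r → F p < F q)
    {i j : α} {v : β} (hij : i < j) (hi : F i = v) (hj : F j = v) :
    (∀ x ∈ Set.Icc i j, v ≤ F x) ∧ ∀ x ∉ Set.Icc i j, F x ≤ v := by
  subst hi
  refine ⟨fun x ⟨hix, hxj⟩ => ?_, fun x hx => ?_⟩
  · by_contra! hx
    rcases hix.eq_or_lt with rfl | hix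
    · exact hx.false
    rcases hxj.eq_or_lt with rfl | hxj
    · exact (hx.trans_eq hj.symm).false
    exact ((hdesc hix hxj hx).trans hx).ne hj
  · by_contra! hFx
    rcases lt_or_ge x i with hxi | hix
    · exact (hdesc hxi hij hFx).ne hj
    · exact (hasc hij (lt_of_not_ge fun hxj => hx ⟨hix, hxj⟩) (hj.trans_lt hFx)).ne' hj

open Breakpoints Real in
theorem pd_minus_distanceLike_general (N : ℕ) (u : Fin N → ℝ) (hu : StrictMono u)
    (c d : Fin (N + 1) → ℝ) (f : ℝ → ℝ)
    (hpiece : ∀ (m : Fin (N + 1)) (x : ℝ),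
      (∀ k : Fin N, ((k : ℕ) < (m : ℕ) → u k ≤ x) ∧ ((m : ℕ) ≤ (k : ℕ) → x ≤ u k)) →
      f x = Real.log (Real.cosh (x - c m)) + d m)
    (hQ : ∀ k : Fin N, Real.tanh (u k - c k.succ) ≤ Real.tanh (u k - c k.castSucc))
    (a b : ℝ) :
    (∀ k : Fin N,
      Real.tanh (u k - c k.succ) - Real.tanh (u k - a) ≤
        Real.tanh (u k - c k.castSucc) - Real.tanh (u k - a)) ∧
    (∀ m : Fin (N + 1),
      MonotoneOn (fun x => f x - (Real.log (Real.cosh (x - a)) + b))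
        {x : ℝ | ∀ k : Fin N, ((k : ℕ) < (m : ℕ) → u k ≤ x) ∧ ((m : ℕ) ≤ (k : ℕ) → x ≤ u k)} ∨
      AntitoneOn (fun x => f x - (Real.log (Real.cosh (x - a)) + b))
        {x : ℝ | ∀ k : Fin N, ((k : ℕ) < (m : ℕ) → u k ≤ x) ∧ ((m : ℕ) ≤ (k : ℕ) → x ≤ u k)}) ∧
    (∀ i j : ℝ, i < j →
      f i - (Real.log (Real.cosh (i - a)) + b) = 0 →
      f j - (Real.log (Real.cosh (j - a)) + b) = 0 →
      (∀ x ∈ Set.Icc i j, 0 ≤ f x - (Real.log (Real.cosh (x - a)) + b)) ∧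
      (∀ x : ℝ, x ∉ Set.Icc i j → f x - (Real.log (Real.cosh (x - a)) + b) ≤ 0)) := by
  have hF : ∀ m, ∀ x ∈ piece u m, f x - (log (cosh (x - a)) + b) =
      log (cosh (x - c m)) - log (cosh (x - a)) + (d m - b) := fun m x hx => by
    rw [hpiece m x hx]
    ring
  -- Q-concavity at `u k` says `c k.castSucc ≤ c k.succ`, as `tanh` is strictly increasing.
  have hc : Monotone c := Fin.monotone_iff_le_succ.2 fun k => by
    linarith [strictMono_tanh.le_iff_le.1 (hQ k)]
  refine ⟨fun k => sub_le_sub_right (hQ k) _, fun m => ?_, fun i j hij hi hj => ?_⟩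
  · exact (le_total (c m) a).imp (monotoneOn_piece_of_le hF) (antitoneOn_piece_of_ge hF)
  · exact le_on_Icc_and_ge_off_Icc (apply_lt_of_descent hF hu.monotone hc)
      (apply_lt_of_ascent hF hu.monotone hc) hij hi hj

/-- Let `f` be a Q-concave piecewise distance-like function on `ℝ` (pieces
`x ↦ log cosh (x − c m) + d m` on the intervals determined by breakpoints `u`), and let
`g x = log cosh (x − a) + b` be distance-like.  Then `f − g` is Q-concave (left derivatives
≥ right derivatives at breakpoints) and monotone on each piece; moreover if `f − g` vanishes
at `i < j`, then `f − g ≥ 0` on `[i, j]` and `f − g ≤ 0` outside of `[i, j]`. -/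
theorem pd_minus_distanceLike (N : ℕ) (u : Fin N → ℝ) (hu : StrictMono u)
    (c d : Fin (N + 1) → ℝ) (f : ℝ → ℝ) (hf : Continuous f)
    (hpiece : ∀ (m : Fin (N + 1)) (x : ℝ),
      (∀ k : Fin N, ((k : ℕ) < (m : ℕ) → u k ≤ x) ∧ ((m : ℕ) ≤ (k : ℕ) → x ≤ u k)) →
      f x = Real.log (Real.cosh (x - c m)) + d m)
    (hQ : ∀ k : Fin N, Real.tanh (u k - c k.succ) ≤ Real.tanh (u k - c k.castSucc))
    (a b : ℝ) :
    (∀ k : Fin N,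
      Real.tanh (u k - c k.succ) - Real.tanh (u k - a) ≤
        Real.tanh (u k - c k.castSucc) - Real.tanh (u k - a)) ∧
    (∀ m : Fin (N + 1),
      MonotoneOn (fun x => f x - (Real.log (Real.cosh (x - a)) + b))
        {x : ℝ | ∀ k : Fin N, ((k : ℕ) < (m : ℕ) → u k ≤ x) ∧ ((m : ℕ) ≤ (k : ℕ) → x ≤ u k)} ∨
      AntitoneOn (fun x => f x - (Real.log (Real.cosh (x - a)) + b))
        {x : ℝ | ∀ k : Fin N, ((k : ℕ) < (m : ℕ) → u k ≤ x) ∧ ((m : ℕ) ≤ (k : ℕ) → x ≤ u k)}) ∧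
    (∀ i j : ℝ, i < j →
      f i - (Real.log (Real.cosh (i - a)) + b) = 0 →
      f j - (Real.log (Real.cosh (j - a)) + b) = 0 →
      (∀ x ∈ Set.Icc i j, 0 ≤ f x - (Real.log (Real.cosh (x - a)) + b)) ∧
      (∀ x : ℝ, x ∉ Set.Icc i j → f x - (Real.log (Real.cosh (x - a)) + b) ≤ 0)) :=
  pd_minus_distanceLike_general N u hu c d f hpiece hQ a b
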